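/- arXiv:1906.12112 — 2 statements merged into one kernel-verified Lean document; each statement's English description precedes it below -/
import Mathlib

section
/- Let M be symmetric positive definite, s ≠ 0, l = Ms, and τ₁ ≥ 1. If H_k is symmetric with H_k ⪯ τ₁ M^{-1} (i.e., τ₁ M^{-1} − H_k is positive semidefinite), then the BFGS update H_{k+1} = (I − s lᵀ/(sᵀl)) H_k (I − l sᵀ/(sᵀl)) + s sᵀ/(sᵀl) satisfies H_{k+1} ⪯ τ₁ M^{-1}. -/
/-!
Write `c = sᵀl` and `P = I - s lᵀ / c`, so that the update reads `H⁺ = P H Pᵀ + s sᵀ / c`.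
Since `M⁻¹ l = s`, the projection `P` shrinks `M⁻¹` exactly by the new curvature term:
`P M⁻¹ Pᵀ = M⁻¹ - s sᵀ / c`. Hence
`τ₁ M⁻¹ - H⁺ = P (τ₁ M⁻¹ - H) Pᵀ + (τ₁ - 1) s sᵀ / c`,
a congruence of a positive semidefinite matrix plus a nonnegative multiple of `s sᵀ`.
-/

open Matrix

variable {ι K : Type*} [Fintype ι] [DecidableEq ι] [Field K]

def bfgsInverseUpdate (H : Matrix ι ι K) (s l : ι → K) : Matrix ι ι K :=
  (1 - (s ⬝ᵥ l)⁻¹ • vecMulVec s l) * H * (1 - (s ⬝ᵥ l)⁻¹ • vecMulVec l s)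
    + (s ⬝ᵥ l)⁻¹ • vecMulVec s s

lemma one_sub_smul_vecMulVec_mul_mul {W : Matrix ι ι K} {s l : ι → K}
    (hWl : W *ᵥ l = s) (hlW : l ᵥ* W = s) (hc : s ⬝ᵥ l ≠ 0) :
    (1 - (s ⬝ᵥ l)⁻¹ • vecMulVec s l) * W * (1 - (s ⬝ᵥ l)⁻¹ • vecMulVec l s)
      = W - (s ⬝ᵥ l)⁻¹ • vecMulVec s s := by
  have hsW : vecMulVec s l * W = vecMulVec s s := by rw [vecMulVec_mul, hlW]
  have hWs : W * vecMulVec l s = vecMulVec s s := by rw [mul_vecMulVec, hWl]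
  have hss : vecMulVec s s * vecMulVec l s = (s ⬝ᵥ l) • vecMulVec s s := by
    rw [vecMulVec_mul_vecMulVec, vecMulVec_smul]
  simp only [sub_mul, mul_sub, one_mul, mul_one, smul_mul_assoc, mul_smul_comm, hsW, hWs, hss,
    smul_smul]
  match_scalars <;> simp [hc]

lemma smul_sub_bfgsInverseUpdate {W H : Matrix ι ι K} {s l : ι → K}
    (hWl : W *ᵥ l = s) (hlW : l ᵥ* W = s) (hc : s ⬝ᵥ l ≠ 0) (τ : K) :
    τ • W - bfgsInverseUpdate H s l
      = (1 - (s ⬝ᵥ l)⁻¹ • vecMulVec s l) * (τ • W - H) * (1 - (s ⬝ᵥ l)⁻¹ • vecMulVec l s)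
        + ((τ - 1) * (s ⬝ᵥ l)⁻¹) • vecMulVec s s := by
  set P := 1 - (s ⬝ᵥ l)⁻¹ • vecMulVec s l
  set Q := 1 - (s ⬝ᵥ l)⁻¹ • vecMulVec l s
  rw [bfgsInverseUpdate, mul_sub P, sub_mul _ _ Q, mul_smul_comm, smul_mul_assoc,
    one_sub_smul_vecMulVec_mul_mul hWl hlW hc]
  module

lemma posSemidef_smul_sub_bfgsInverseUpdate {W H : Matrix ι ι ℝ} {s l : ι → ℝ}
    (hWl : W *ᵥ l = s) (hlW : l ᵥ* W = s) (hc : 0 < s ⬝ᵥ l) {τ : ℝ} (hτ : 1 ≤ τ)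
    (hH : (τ • W - H).PosSemidef) :
    (τ • W - bfgsInverseUpdate H s l).PosSemidef := by
  have hPt : (1 - (s ⬝ᵥ l)⁻¹ • vecMulVec l s) = (1 - (s ⬝ᵥ l)⁻¹ • vecMulVec s l)ᴴ := by
    simp [conjTranspose_eq_transpose_of_trivial, transpose_vecMulVec]
  rw [smul_sub_bfgsInverseUpdate hWl hlW hc.ne', hPt]
  refine (hH.mul_mul_conjTranspose_same _).add (PosSemidef.smul ?_ ?_)
  · simpa using posSemidef_vecMulVec_self_star s
  · exact mul_nonneg (by linarith) (inv_nonneg.mpr hc.le)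

theorem stmt5_general {n : ℕ} (M : Matrix (Fin n) (Fin n) ℝ) (hM : M.PosDef)
    (s : Fin n → ℝ) (hs : s ≠ 0) (l : Fin n → ℝ) (hl : l = M.mulVec s)
    (τ₁ : ℝ) (hτ₁ : 1 ≤ τ₁)
    (Hk : Matrix (Fin n) (Fin n) ℝ)
    (hHk : (τ₁ • M⁻¹ - Hk).PosSemidef)
    (Hk1 : Matrix (Fin n) (Fin n) ℝ)
    (hHk1 : Hk1 = (1 - (s ⬝ᵥ l)⁻¹ • vecMulVec s l) * Hk * (1 - (s ⬝ᵥ l)⁻¹ • vecMulVec l s)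
        + (s ⬝ᵥ l)⁻¹ • vecMulVec s s) :
    (τ₁ • M⁻¹ - Hk1).PosSemidef := by
  have : Invertible M := hM.isUnit.invertible
  have hMinvl : M⁻¹ *ᵥ l = s := inv_mulVec_eq_vec hl
  have hlMinv : l ᵥ* M⁻¹ = s := by
    rw [← mulVec_transpose, ← conjTranspose_eq_transpose_of_trivial, hM.isHermitian.inv.eq, hMinvl]
  have hc : 0 < s ⬝ᵥ l := by simpa [hl] using hM.dotProduct_mulVec_pos hs
  exact hHk1 ▸ posSemidef_smul_sub_bfgsInverseUpdate hMinvl hlMinv hc hτ₁ hHk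

theorem stmt5 {n : ℕ} (M : Matrix (Fin n) (Fin n) ℝ) (hM : M.PosDef)
    (s : Fin n → ℝ) (hs : s ≠ 0) (l : Fin n → ℝ) (hl : l = M.mulVec s)
    (τ₁ : ℝ) (hτ₁ : 1 ≤ τ₁)
    (Hk : Matrix (Fin n) (Fin n) ℝ) (hHkSymm : Hk.IsSymm)
    (hHk : (τ₁ • M⁻¹ - Hk).PosSemidef)
    (Hk1 : Matrix (Fin n) (Fin n) ℝ)
    (hHk1 : Hk1 = (1 - (s ⬝ᵥ l)⁻¹ • vecMulVec s l) * Hk * (1 - (s ⬝ᵥ l)⁻¹ • vecMulVec l s)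
        + (s ⬝ᵥ l)⁻¹ • vecMulVec s s) :
    (τ₁ • M⁻¹ - Hk1).PosSemidef :=
  stmt5_general M hM s hs l hl τ₁ hτ₁ Hk hHk Hk1 hHk1
end

section
/- Let M be a symmetric positive definite matrix, s ≠ 0, l = Ms, and B_k symmetric positive definite. Then the BFGS update B_{k+1} = B_k + llᵀ/(lᵀs) − B_k s sᵀ B_k/(sᵀ B_k s) is symmetric positive definite. -/
/-!
Split the update as `D + (lᵀs)⁻¹ llᵀ` with `D = B - (sᵀBs)⁻¹ (Bs)(Bs)ᵀ`. Cauchy–Schwarz for the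
inner product `uᵀBv`, in the exact form `c² · xᵀDx = yᵀBy` with `c = sᵀBs` and
`y = c x - (sᵀBx) s`, shows that `D` is positive semidefinite and that `xᵀDx = 0` forces `x` to
be a multiple of `s`. On such `x ≠ 0` the rank-one term is positive because `lᵀs = sᵀMs > 0`.
-/

open Matrix

namespace Matrix

variable {ι : Type*} [Fintype ι]

theorem dotProduct_vecMulVec_mulVec (x u v : ι → ℝ) :
    x ⬝ᵥ (vecMulVec u v *ᵥ x) = (x ⬝ᵥ u) * (v ⬝ᵥ x) := by
  rw [vecMulVec_mulVec, op_smul_eq_smul, dotProduct_smul, smul_eq_mul, mul_comm]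

theorem IsHermitian.mulVec_dotProduct_eq {B : Matrix ι ι ℝ} (hB : B.IsHermitian) (s x : ι → ℝ) :
    (B *ᵥ s) ⬝ᵥ x = s ⬝ᵥ (B *ᵥ x) := by
  rw [dotProduct_mulVec, ← mulVec_transpose, ← conjTranspose_eq_transpose_of_trivial, hB]

noncomputable def deflation (B : Matrix ι ι ℝ) (s : ι → ℝ) : Matrix ι ι ℝ :=
  B - (s ⬝ᵥ B *ᵥ s)⁻¹ • vecMulVec (B *ᵥ s) (B *ᵥ s)

noncomputable def bfgsUpdate (B : Matrix ι ι ℝ) (s l : ι → ℝ) : Matrix ι ι ℝ :=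
  B + (l ⬝ᵥ s)⁻¹ • vecMulVec l l - (s ⬝ᵥ B *ᵥ s)⁻¹ • vecMulVec (B *ᵥ s) (B *ᵥ s)

theorem bfgsUpdate_eq_deflation_add (B : Matrix ι ι ℝ) (s l : ι → ℝ) :
    bfgsUpdate B s l = deflation B s + (l ⬝ᵥ s)⁻¹ • vecMulVec l l :=
  add_sub_right_comm _ _ _

theorem IsHermitian.sq_mul_dotProduct_deflation_mulVec {B : Matrix ι ι ℝ} (hB : B.IsHermitian)
    {s : ι → ℝ} (hc : s ⬝ᵥ B *ᵥ s ≠ 0) (x : ι → ℝ) :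
    (s ⬝ᵥ B *ᵥ s) ^ 2 * (x ⬝ᵥ deflation B s *ᵥ x) =
      let y := (s ⬝ᵥ B *ᵥ s) • x - ((B *ᵥ s) ⬝ᵥ x) • s
      y ⬝ᵥ B *ᵥ y := by
  simp only [deflation, sub_mulVec, smul_mulVec, dotProduct_sub, dotProduct_smul,
    dotProduct_vecMulVec_mulVec, mulVec_sub, mulVec_smul, sub_dotProduct, smul_dotProduct,
    smul_eq_mul]
  rw [dotProduct_comm x (B *ᵥ s), ← hB.mulVec_dotProduct_eq s x]
  field_simp
  ring

theorem posSemidef_vecMulVec_self (v : ι → ℝ) : (vecMulVec v v).PosSemidef := by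
  simpa using posSemidef_vecMulVec_self_star v

theorem PosDef.posSemidef_deflation {B : Matrix ι ι ℝ} (hB : B.PosDef) (s : ι → ℝ) :
    (deflation B s).PosSemidef := by
  refine .of_dotProduct_mulVec_nonneg
    (hB.isHermitian.sub ((posSemidef_vecMulVec_self _).isHermitian.smul (.all _))) fun x => ?_
  rw [star_trivial]
  rcases eq_or_ne s 0 with rfl | hs
  · simpa [deflation] using hB.posSemidef.dotProduct_mulVec_nonneg x
  have hc : 0 < s ⬝ᵥ B *ᵥ s := by simpa using hB.dotProduct_mulVec_pos hs
  have hy := hB.posSemidef.dotProduct_mulVec_nonneg ((s ⬝ᵥ B *ᵥ s) • x - ((B *ᵥ s) ⬝ᵥ x) • s)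
  rw [star_trivial, ← hB.isHermitian.sq_mul_dotProduct_deflation_mulVec hc.ne'] at hy
  exact (mul_nonneg_iff_of_pos_left (by positivity)).1 hy

theorem PosDef.smul_eq_smul_of_dotProduct_deflation_mulVec_eq_zero {B : Matrix ι ι ℝ}
    (hB : B.PosDef) {s x : ι → ℝ} (hx : x ⬝ᵥ deflation B s *ᵥ x = 0) :
    (s ⬝ᵥ B *ᵥ s) • x = ((B *ᵥ s) ⬝ᵥ x) • s := by
  rcases eq_or_ne s 0 with rfl | hs
  · simp
  have hc : 0 < s ⬝ᵥ B *ᵥ s := by simpa using hB.dotProduct_mulVec_pos hs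
  rw [← sub_eq_zero]
  by_contra hy
  have hpos := hB.dotProduct_mulVec_pos hy
  rw [star_trivial, ← hB.isHermitian.sq_mul_dotProduct_deflation_mulVec hc.ne', hx,
    mul_zero] at hpos
  exact hpos.false

theorem PosDef.bfgsUpdate {B : Matrix ι ι ℝ} (hB : B.PosDef) {s l : ι → ℝ}
    (hl : 0 < l ⬝ᵥ s) : (bfgsUpdate B s l).PosDef := by
  have hs : s ≠ 0 := by
    rintro rfl
    simp at hl
  have hc : 0 < s ⬝ᵥ B *ᵥ s := by simpa using hB.dotProduct_mulVec_pos hs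
  have hD := hB.posSemidef_deflation s
  have hL := (posSemidef_vecMulVec_self l).smul (inv_nonneg.2 hl.le)
  rw [bfgsUpdate_eq_deflation_add]
  refine .of_dotProduct_mulVec_pos (hD.add hL).isHermitian fun x hx => ?_
  rw [star_trivial, add_mulVec, dotProduct_add, smul_mulVec, dotProduct_smul,
    dotProduct_vecMulVec_mulVec, dotProduct_comm x l, smul_eq_mul]
  have hdef := hD.dotProduct_mulVec_nonneg x
  rw [star_trivial] at hdef
  rcases hdef.eq_or_lt with hzero | hpos
  · have hlx : l ⬝ᵥ x ≠ 0 := by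
      intro hlx
      have hsx := hB.smul_eq_smul_of_dotProduct_deflation_mulVec_eq_zero hzero.symm
      have hb : (B *ᵥ s) ⬝ᵥ x = 0 := by
        simpa [hlx, hl.ne'] using congrArg (l ⬝ᵥ ·) hsx
      simp [hb, hc.ne', hx] at hsx
    rw [← hzero, zero_add]
    exact mul_pos (inv_pos.2 hl) (mul_self_pos.2 hlx)
  · exact add_pos_of_pos_of_nonneg hpos (mul_nonneg (inv_nonneg.2 hl.le) (mul_self_nonneg _))

end Matrix

theorem stmt17 {n : ℕ} (M : Matrix (Fin n) (Fin n) ℝ) (hM : M.PosDef)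
    (s : Fin n → ℝ) (hs : s ≠ 0) (l : Fin n → ℝ) (hl : l = M.mulVec s)
    (Bk : Matrix (Fin n) (Fin n) ℝ) (hBk : Bk.PosDef)
    (Bk1 : Matrix (Fin n) (Fin n) ℝ)
    (hBk1 : Bk1 = Bk + (l ⬝ᵥ s)⁻¹ • vecMulVec l l
        - (s ⬝ᵥ Bk.mulVec s)⁻¹ • vecMulVec (Bk.mulVec s) (Bk.mulVec s)) :
    Bk1.PosDef := by
  have hcurv : 0 < l ⬝ᵥ s := by
    simpa [hl, dotProduct_comm] using hM.dotProduct_mulVec_pos hs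
  exact hBk1 ▸ hBk.bfgsUpdate hcurv
end
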